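/- arXiv:1409.3707 — 3 statements merged into one kernel-verified Lean document; each statement's English description precedes it below -/
import Mathlib

section
/- For all integers n ≥ 2 and i ≥ 1, the Pell numbers satisfy P_{ni+i} = Q_i^{n−1} · P_{2i} − (−1)^i · Σ_{j=1}^{n−1} Q_i^{n−1−j} · P_{ij}, where Q denotes the Pell–Lucas numbers. -/
/-!
With `U`, `V` the Lucas sequences of `X² - aX + b` (Pell: `a = 2`, `b = -1`), the addition formula
and d'Ocagne's identity give `U (m + 2i) = V i * U (m + i) - b ^ i * U m`. Taking `m = k i`, this is
a first-order recurrence in `k`, and unrolling it produces the sum.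
-/

open Finset

section LucasSequence

variable {R : Type*} [CommRing R] {a b : R}

theorem eq_of_recurrence {x y : ℕ → R} (hx : ∀ n, x (n + 2) = a * x (n + 1) - b * x n)
    (hy : ∀ n, y (n + 2) = a * y (n + 1) - b * y n) (h0 : x 0 = y 0) (h1 : x 1 = y 1) :
    ∀ n, x n = y n := by
  intro n
  induction n using Nat.twoStepInduction with
  | zero => exact h0
  | one => exact h1
  | more n ih₀ ih₁ => rw [hx, hy, ih₀, ih₁]

variable {U : ℕ → R} (hU : ∀ n, U (n + 2) = a * U (n + 1) - b * U n)
include hU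

theorem lucasU_add (hU0 : U 0 = 0) (hU1 : U 1 = 1) (m n : ℕ) :
    U (m + n + 1) = U (m + 1) * U (n + 1) - b * U m * U n := by
  refine eq_of_recurrence (x := fun n => U (m + n + 1))
    (y := fun n => U (m + 1) * U (n + 1) - b * U m * U n) (fun n => hU (m + n + 1)) (fun n => ?_)
    (by simp [hU0, hU1]) (by simp [hU, hU0, hU1, mul_comm]) n
  simp only [hU]
  ring

theorem lucasU_dOcagne (hU0 : U 0 = 0) (hU1 : U 1 = 1) (k m : ℕ) :
    U (k + 1) * U (m + k) - U k * U (m + k + 1) = b ^ k * U m := by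
  induction k with
  | zero => simp [hU0, hU1]
  | succ k ih =>
    rw [show m + (k + 1) = m + k + 1 by ring, hU, hU, pow_succ]
    linear_combination b * ih

theorem lucasV_eq {V : ℕ → R} (hV : ∀ n, V (n + 2) = a * V (n + 1) - b * V n)
    (hU0 : U 0 = 0) (hU1 : U 1 = 1) (hV0 : V 0 = 2) (hV1 : V 1 = a) (n : ℕ) :
    V n = 2 * U (n + 1) - a * U n :=
  eq_of_recurrence (y := fun n => 2 * U (n + 1) - a * U n) hV (fun n => by simp only [hU]; ring)
    (by simp [hV0, hU0, hU1]) (by rw [hV1, hU, hU0, hU1]; ring) n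

theorem lucasU_add_two_mul {V : ℕ → R} (hV : ∀ n, V (n + 2) = a * V (n + 1) - b * V n)
    (hU0 : U 0 = 0) (hU1 : U 1 = 1) (hV0 : V 0 = 2) (hV1 : V 1 = a) (m i : ℕ) :
    U (m + 2 * i) = V i * U (m + i) - b ^ i * U m := by
  rcases i with _ | k
  · rw [mul_zero, add_zero, hV0, pow_zero]
    ring
  · rw [lucasV_eq hU hV hU0 hU1 hV0 hV1, show m + 2 * (k + 1) = m + k + (k + 1) + 1 by ring,
      lucasU_add hU hU0 hU1, show m + (k + 1) = m + k + 1 by ring, hU k, pow_succ]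
    linear_combination (-b) * lucasU_dOcagne hU hU0 hU1 k m

end LucasSequence

theorem eq_pow_mul_sub_sum_of_forall_succ {R : Type*} [CommRing R] {x y : ℕ → R} {c d : R}
    (h : ∀ n, x (n + 1) = c * x n - d * y (n + 1)) (n : ℕ) :
    x n = c ^ n * x 0 - d * ∑ j ∈ Icc 1 n, c ^ (n - j) * y j := by
  induction n with
  | zero => simp
  | succ n ih =>
    have hpow : ∀ j ∈ Icc 1 n, c ^ (n + 1 - j) * y j = c * (c ^ (n - j) * y j) := by
      intro j hj
      rw [Nat.sub_add_comm (mem_Icc.mp hj).2, pow_succ]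
      ring
    rw [h, ih, sum_Icc_succ_top (by omega), sum_congr rfl hpow, ← mul_sum, Nat.sub_self, pow_zero]
    ring

theorem pell_sum_general (P Q : ℕ → ℤ)
    (hP0 : P 0 = 0) (hP1 : P 1 = 1)
    (hP : ∀ n : ℕ, P (n + 2) = 2 * P (n + 1) + P n)
    (hQ0 : Q 0 = 2) (hQ1 : Q 1 = 2)
    (hQ : ∀ n : ℕ, Q (n + 2) = 2 * Q (n + 1) + Q n)
    (n i : ℕ) (hn : 2 ≤ n) :
    P (n * i + i) = Q i ^ (n - 1) * P (2 * i) -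
      (-1 : ℤ) ^ i * ∑ j ∈ Finset.Icc 1 (n - 1), Q i ^ (n - 1 - j) * P (i * j) := by
  have hP' : ∀ n, P (n + 2) = 2 * P (n + 1) - (-1) * P n := fun n => by rw [hP]; ring
  have hQ' : ∀ n, Q (n + 2) = 2 * Q (n + 1) - (-1) * Q n := fun n => by rw [hQ]; ring
  have hrec (k : ℕ) :
      P ((k + 1) * i + 2 * i) = Q i * P (k * i + 2 * i) - (-1) ^ i * P (i * (k + 1)) := by
    rw [lucasU_add_two_mul hP' hQ' hP0 hP1 hQ0 hQ1, mul_comm i,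
      show k * i + 2 * i = (k + 1) * i + i by ring]
  obtain ⟨N, rfl⟩ : ∃ N, n = N + 1 := ⟨n - 1, by omega⟩
  rw [show (N + 1) * i + i = N * i + 2 * i by ring, Nat.add_sub_cancel,
    eq_pow_mul_sub_sum_of_forall_succ (x := fun k => P (k * i + 2 * i))
      (y := fun j => P (i * j)) hrec N, zero_mul, zero_add]

/-- Pell: P_{ni+i} = Q_i^{n−1} · P_{2i} − (−1)^i · Σ_{j=1}^{n−1} Q_i^{n−1−j} · P_{ij}. -/
theorem pell_sum (P Q : ℕ → ℤ)
    (hP0 : P 0 = 0) (hP1 : P 1 = 1)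
    (hP : ∀ n : ℕ, P (n + 2) = 2 * P (n + 1) + P n)
    (hQ0 : Q 0 = 2) (hQ1 : Q 1 = 2)
    (hQ : ∀ n : ℕ, Q (n + 2) = 2 * Q (n + 1) + Q n)
    (n i : ℕ) (hn : 2 ≤ n) (hi : 1 ≤ i) :
    P (n * i + i) = Q i ^ (n - 1) * P (2 * i) -
      (-1 : ℤ) ^ i * ∑ j ∈ Finset.Icc 1 (n - 1), Q i ^ (n - 1 - j) * P (i * j) :=
  pell_sum_general P Q hP0 hP1 hP hQ0 hQ1 hQ n i hn
end

section
/- For all integers n ≥ 2 and odd i ≥ 1, the Horadam sequence satisfies W_{ni+i} = Σ_{j=0}^{⌊n/2⌋} C(n−j, j) · V_i^{n−2j} · q^{ij} · W_i + q^i · a · Σ_{j=0}^{⌊(n−1)/2⌋} C(n−j−1, j) · V_i^{n−2j−1} · q^{ij}, where V is the generalized Lucas sequence with the same parameters p, q and C(m,k) denotes the binomial coefficient. -/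
/-!
For odd `i` the addition formula `W (k + 2 i) = V i * W (k + i) - (-q) ^ i * W k` says that
`m ↦ W (m i)` is again a Horadam sequence, with parameters `V i` and `q ^ i`. Every sequence `X`
with `X (m + 2) = P X (m + 1) + Q X m` satisfies `X (n + 1) = U (n + 1) X 1 + Q U n X 0`, where `U`
is the Lucas sequence of the first kind of `(P, Q)`, and `U (n + 1)` has the binomial expansion
`∑ j, C(n - j, j) P ^ (n - 2 j) Q ^ j` (Pascal's rule gives the recurrence of the sums).
-/

open Finset

variable {R : Type*} [CommRing R]

def lucasU (P Q : R) : ℕ → R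
  | 0 => 0
  | 1 => 1
  | n + 2 => P * lucasU P Q (n + 1) + Q * lucasU P Q n

section LucasU

variable (P Q : R)

@[simp] lemma lucasU_zero : lucasU P Q 0 = 0 := rfl

@[simp] lemma lucasU_one : lucasU P Q 1 = 1 := rfl

lemma lucasU_add_two (n : ℕ) :
    lucasU P Q (n + 2) = P * lucasU P Q (n + 1) + Q * lucasU P Q n := rfl

lemma eq_lucasU_mul_add {X : ℕ → R} (hX : ∀ m, X (m + 2) = P * X (m + 1) + Q * X m)
    (n : ℕ) :
    X (n + 1) = lucasU P Q (n + 1) * X 1 + Q * lucasU P Q n * X 0 := by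
  induction n using Nat.twoStepInduction with
  | zero => simp
  | one => simp [hX 0, lucasU_add_two]
  | more m ih₀ ih₁ =>
    rw [hX (m + 1), ih₁, ih₀, lucasU_add_two P Q (m + 1), lucasU_add_two P Q m]
    ring

end LucasU

section BinomialExpansion

variable (P Q : R)

def lucasBinomTerm (m j : ℕ) : R := ((m - j).choose j : R) * P ^ (m - 2 * j) * Q ^ j

lemma lucasBinomTerm_zero_right (m : ℕ) : lucasBinomTerm P Q m 0 = P ^ m := by
  simp [lucasBinomTerm]

lemma lucasBinomTerm_eq_zero {m j : ℕ} (h : m < 2 * j) : lucasBinomTerm P Q m j = 0 := by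
  simp [lucasBinomTerm, Nat.choose_eq_zero_of_lt (show m - j < j by omega)]

lemma lucasBinomTerm_add_two_succ (m k : ℕ) :
    lucasBinomTerm P Q (m + 2) (k + 1) =
      P * lucasBinomTerm P Q (m + 1) (k + 1) + Q * lucasBinomTerm P Q m k := by
  rcases lt_or_ge m (2 * k) with hm | hm
  · simp [lucasBinomTerm_eq_zero P Q hm,
      lucasBinomTerm_eq_zero P Q (show m + 2 < 2 * (k + 1) by omega),
      lucasBinomTerm_eq_zero P Q (show m + 1 < 2 * (k + 1) by omega)]
  -- Pascal's rule; the summand `C(m - k, k + 1)` vanishes unless `P ^ (m - 2 k)` has a factor `P`.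
  have hpow : ((m - k).choose (k + 1) : R) * P ^ (m - 2 * k) =
      P * ((m - k).choose (k + 1) * P ^ (m - (2 * k + 1))) := by
    rcases eq_or_lt_of_le hm with rfl | hlt
    · simp [Nat.choose_eq_zero_of_lt (show 2 * k - k < k + 1 by omega)]
    · rw [show m - 2 * k = m - (2 * k + 1) + 1 by omega, pow_succ]
      ring
  simp only [lucasBinomTerm, show m + 2 - (k + 1) = m - k + 1 by omega,
    show m + 2 - 2 * (k + 1) = m - 2 * k by omega, show m + 1 - (k + 1) = m - k by omega,
    show m + 1 - 2 * (k + 1) = m - (2 * k + 1) by omega, Nat.choose_succ_succ, Nat.cast_add]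
  linear_combination Q ^ (k + 1) * hpow

lemma sum_range_lucasBinomTerm_of_le {m N : ℕ} (h : m / 2 + 1 ≤ N) :
    ∑ j ∈ range N, lucasBinomTerm P Q m j =
      ∑ j ∈ range (m / 2 + 1), lucasBinomTerm P Q m j := by
  refine (sum_subset (range_subset_range.mpr h) fun j _ hj => ?_).symm
  exact lucasBinomTerm_eq_zero P Q (by simp at hj; omega)

lemma lucasU_succ_eq_sum (m : ℕ) :
    lucasU P Q (m + 1) = ∑ j ∈ range (m / 2 + 1), lucasBinomTerm P Q m j := by
  induction m using Nat.twoStepInduction with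
  | zero => simp [lucasBinomTerm]
  | one => simp [lucasBinomTerm, lucasU_add_two]
  | more m ih₀ ih₁ =>
    rw [lucasU_add_two, ih₁, ih₀,
      ← sum_range_lucasBinomTerm_of_le P Q (m := m + 2) (N := m + 3) (by omega),
      ← sum_range_lucasBinomTerm_of_le P Q (m := m + 1) (N := m + 3) (by omega),
      ← sum_range_lucasBinomTerm_of_le P Q (m := m) (N := m + 2) (by omega),
      sum_range_succ', sum_range_succ' _ (m + 2)]
    simp only [lucasBinomTerm_add_two_succ, lucasBinomTerm_zero_right, sum_add_distrib,
      ← mul_sum]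
    ring

end BinomialExpansion

section Horadam

variable {p q : R} {W V : ℕ → R}

lemma horadam_add_two_mul (hW : ∀ n, W (n + 2) = p * W (n + 1) + q * W n)
    (hV0 : V 0 = 2) (hV1 : V 1 = p) (hV : ∀ n, V (n + 2) = p * V (n + 1) + q * V n) (m k : ℕ) :
    W (k + 2 * m) = V m * W (k + m) - (-q) ^ m * W k := by
  induction m using Nat.twoStepInduction generalizing k with
  | zero =>
    simp only [mul_zero, add_zero, hV0, pow_zero]
    ring
  | one => rw [hW k, hV1]; ring
  | more m ih₀ ih₁ =>
    have h₁ := ih₁ (k + 2)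
    have h₂ := ih₁ k
    have h₃ := ih₀ (k + 2)
    have h₄ := hW (k + m + 1)
    have h₅ := hV m
    ring_nf at h₁ h₂ h₃ h₄ h₅ ⊢
    linear_combination h₁ + V (1 + m) * h₄ - q * h₂ + q * h₃ - W (2 + k + m) * h₅

lemma horadam_mul_add_two_of_odd (hW : ∀ n, W (n + 2) = p * W (n + 1) + q * W n)
    (hV0 : V 0 = 2) (hV1 : V 1 = p) (hV : ∀ n, V (n + 2) = p * V (n + 1) + q * V n)
    {i : ℕ} (hodd : Odd i) (m : ℕ) :
    W ((m + 2) * i) = V i * W ((m + 1) * i) + q ^ i * W (m * i) := by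
  have h := horadam_add_two_mul hW hV0 hV1 hV i (m * i)
  rw [hodd.neg_pow] at h
  rw [show (m + 2) * i = m * i + 2 * i by ring, show (m + 1) * i = m * i + i by ring, h]
  ring

end Horadam

theorem horadam_binomial_odd_general (a p q : ℤ) (W V : ℕ → ℤ)
    (hW0 : W 0 = a)
    (hW : ∀ n : ℕ, W (n + 2) = p * W (n + 1) + q * W n)
    (hV0 : V 0 = 2) (hV1 : V 1 = p)
    (hV : ∀ n : ℕ, V (n + 2) = p * V (n + 1) + q * V n)
    (n i : ℕ) (hn : 2 ≤ n) (hodd : Odd i) :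
    W (n * i + i) =
      (∑ j ∈ Finset.range (n / 2 + 1),
        ((n - j).choose j : ℤ) * V i ^ (n - 2 * j) * q ^ (i * j) * W i) +
      q ^ i * a * ∑ j ∈ Finset.range ((n - 1) / 2 + 1),
        ((n - j - 1).choose j : ℤ) * V i ^ (n - 2 * j - 1) * q ^ (i * j) := by
  have hsub := eq_lucasU_mul_add (V i) (q ^ i) (X := fun m => W (m * i))
    (horadam_mul_add_two_of_odd hW hV0 hV1 hV hodd) n
  obtain ⟨n, rfl⟩ : ∃ m, n = m + 1 := ⟨n - 1, by omega⟩
  have hfirst : lucasU (V i) (q ^ i) (n + 1 + 1) =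
      ∑ j ∈ range ((n + 1) / 2 + 1),
        ((n + 1 - j).choose j : ℤ) * V i ^ (n + 1 - 2 * j) * q ^ (i * j) := by
    simp only [lucasU_succ_eq_sum, lucasBinomTerm, pow_mul]
  have hsecond : lucasU (V i) (q ^ i) (n + 1) =
      ∑ j ∈ range ((n + 1 - 1) / 2 + 1),
        ((n + 1 - j - 1).choose j : ℤ) * V i ^ (n + 1 - 2 * j - 1) * q ^ (i * j) := by
    refine (lucasU_succ_eq_sum _ _ n).trans (sum_congr rfl fun j _ => ?_)
    rw [lucasBinomTerm, pow_mul, show n + 1 - j - 1 = n - j by omega,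
      show n + 1 - 2 * j - 1 = n - 2 * j by omega]
  rw [show (n + 1) * i + i = (n + 1 + 1) * i by ring, hsub, hfirst, hsecond, ← sum_mul, one_mul,
    zero_mul, hW0]
  ring

/-- Horadam binomial sum, odd index i. -/
theorem horadam_binomial_odd (a b p q : ℤ) (W V : ℕ → ℤ)
    (hW0 : W 0 = a) (hW1 : W 1 = b)
    (hW : ∀ n : ℕ, W (n + 2) = p * W (n + 1) + q * W n)
    (hV0 : V 0 = 2) (hV1 : V 1 = p)
    (hV : ∀ n : ℕ, V (n + 2) = p * V (n + 1) + q * V n)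
    (n i : ℕ) (hn : 2 ≤ n) (hi : 1 ≤ i) (hodd : Odd i) :
    W (n * i + i) =
      (∑ j ∈ Finset.range (n / 2 + 1),
        ((n - j).choose j : ℤ) * V i ^ (n - 2 * j) * q ^ (i * j) * W i) +
      q ^ i * a * ∑ j ∈ Finset.range ((n - 1) / 2 + 1),
        ((n - j - 1).choose j : ℤ) * V i ^ (n - 2 * j - 1) * q ^ (i * j) :=
  horadam_binomial_odd_general a p q W V hW0 hW hV0 hV1 hV n i hn hodd
end

section
/- For all integers n ≥ 2, the Lucas numbers satisfy L_{2n+2} = Σ_{j=0}^{⌊n/2⌋} C(n−j, j) · (−1)^j · 3^{n+1−2j} − 2 · Σ_{j=0}^{⌊(n−1)/2⌋} C(n−j−1, j) · (−1)^j · 3^{n−1−2j}, where C(m,k) denotes the binomial coefficient. -/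
/-!
Write `S n = ∑ⱼ C(n-j, j) (-1)^j 3^(n-2j)`. Pascal's rule gives `S (n+2) = 3 S (n+1) - S n`, and
the even-indexed Lucas numbers obey the same recurrence, `L (k+4) = 3 L (k+2) - L k`. The right-hand
side of the identity is `3 S n - 2 S (n-1)`, so both sides solve one second-order recurrence in `n`
and it suffices to compare them at `n = 1, 2`.
-/

open Finset

section ShallowDiagonal

variable {R : Type*} [CommSemiring R] (a b : R)

def shallowDiagonalTerm (n j : ℕ) : R := ((n - j).choose j : R) * b ^ j * a ^ (n - 2 * j)

/-- The summands `C(n-j, j)` run along a shallow diagonal of Pascal's triangle;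
`shallowDiagonalSum (2 * x) (-1) n` is the Chebyshev polynomial `U n` evaluated at `x`. -/
def shallowDiagonalSum (n : ℕ) : R := ∑ j ∈ range (n / 2 + 1), shallowDiagonalTerm a b n j

lemma shallowDiagonalTerm_eq_zero {n j : ℕ} (h : n < 2 * j) :
    shallowDiagonalTerm a b n j = 0 := by
  simp [shallowDiagonalTerm, Nat.choose_eq_zero_of_lt (by omega : n - j < j)]

lemma sum_range_shallowDiagonalTerm {n N : ℕ} (hN : n / 2 < N) :
    ∑ j ∈ range N, shallowDiagonalTerm a b n j = shallowDiagonalSum a b n := by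
  refine (sum_subset (range_subset_range.2 (by omega)) fun j _ hj ↦ ?_).symm
  exact shallowDiagonalTerm_eq_zero a b (by simp only [mem_range] at hj; omega)

lemma mul_shallowDiagonalTerm_succ_succ (n k : ℕ) :
    a * shallowDiagonalTerm a b (n + 1) (k + 1) =
      ((n - k).choose (k + 1) : R) * b ^ (k + 1) * a ^ (n - 2 * k) := by
  rcases le_or_gt (2 * k + 1) n with hk | hk
  · rw [shallowDiagonalTerm, show n + 1 - (k + 1) = n - k by omega,
      show n - 2 * k = n + 1 - 2 * (k + 1) + 1 by omega, pow_succ]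
    ring
  · rw [shallowDiagonalTerm_eq_zero a b (by omega), Nat.choose_eq_zero_of_lt (by omega)]
    simp

lemma shallowDiagonalTerm_add_two_succ (n k : ℕ) :
    shallowDiagonalTerm a b (n + 2) (k + 1) =
      a * shallowDiagonalTerm a b (n + 1) (k + 1) + b * shallowDiagonalTerm a b n k := by
  rw [mul_shallowDiagonalTerm_succ_succ]
  rcases le_or_gt k n with hk | hk
  · rw [shallowDiagonalTerm, shallowDiagonalTerm, show n + 2 - (k + 1) = n - k + 1 by omega,
      Nat.choose_succ_succ, show n + 2 - 2 * (k + 1) = n - 2 * k by omega]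
    push_cast
    ring
  · rw [shallowDiagonalTerm_eq_zero a b (by omega), shallowDiagonalTerm_eq_zero a b (by omega),
      Nat.choose_eq_zero_of_lt (by omega)]
    simp

lemma shallowDiagonalSum_zero : shallowDiagonalSum a b 0 = 1 := by
  simp [shallowDiagonalSum, shallowDiagonalTerm]

lemma shallowDiagonalSum_one : shallowDiagonalSum a b 1 = a := by
  simp [shallowDiagonalSum, shallowDiagonalTerm]

lemma shallowDiagonalSum_add_two (n : ℕ) :
    shallowDiagonalSum a b (n + 2) =
      a * shallowDiagonalSum a b (n + 1) + b * shallowDiagonalSum a b n := by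
  rw [← sum_range_shallowDiagonalTerm a b (N := n + 3) (by omega),
    ← sum_range_shallowDiagonalTerm a b (n := n + 1) (N := n + 3) (by omega),
    ← sum_range_shallowDiagonalTerm a b (N := n + 2) (by omega),
    sum_range_succ' _ (n + 2), sum_range_succ' _ (n + 2)]
  simp only [shallowDiagonalTerm_add_two_succ, sum_add_distrib, mul_add, mul_sum]
  have h0 : shallowDiagonalTerm a b (n + 2) 0 = a * shallowDiagonalTerm a b (n + 1) 0 := by
    simp [shallowDiagonalTerm, pow_succ, mul_comm]
  rw [h0]
  ring

end ShallowDiagonal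

theorem eq_of_recurrence_add_two {α : Type*} {u v : ℕ → α} (f : α → α → α)
    (hu : ∀ n, u (n + 2) = f (u (n + 1)) (u n)) (hv : ∀ n, v (n + 2) = f (v (n + 1)) (v n))
    (h0 : u 0 = v 0) (h1 : u 1 = v 1) : u = v := by
  funext n
  induction n using Nat.twoStepInduction with
  | zero => exact h0
  | one => exact h1
  | more n ih₀ ih₁ => rw [hu, hv, ih₀, ih₁]

theorem add_four_eq_of_fib_recurrence {R : Type*} [CommRing R] {L : ℕ → R}
    (hL : ∀ n, L (n + 2) = L (n + 1) + L n) (n : ℕ) : L (n + 4) = 3 * L (n + 2) - L n := by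
  linear_combination hL (n + 2) + hL (n + 1) - hL n

theorem lucas_even_eq_shallowDiagonalSum {R : Type*} [CommRing R] {L : ℕ → R}
    (hL0 : L 0 = 2) (hL1 : L 1 = 1) (hL : ∀ n, L (n + 2) = L (n + 1) + L n) (m : ℕ) :
    L (2 * m + 4) =
      3 * shallowDiagonalSum 3 (-1) (m + 1) - 2 * shallowDiagonalSum (3 : R) (-1) m := by
  have hS (n : ℕ) : shallowDiagonalSum (3 : R) (-1) (n + 2) =
      3 * shallowDiagonalSum 3 (-1) (n + 1) - shallowDiagonalSum 3 (-1) n := by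
    rw [shallowDiagonalSum_add_two]; ring
  refine congrFun (eq_of_recurrence_add_two (u := fun m ↦ L (2 * m + 4))
    (v := fun m ↦ 3 * shallowDiagonalSum 3 (-1) (m + 1) - 2 * shallowDiagonalSum (3 : R) (-1) m)
    (fun x y ↦ 3 * x - y) (fun n ↦ ?_) (fun n ↦ ?_) ?_ ?_) m
  · exact add_four_eq_of_fib_recurrence hL (2 * n + 4)
  · simp only [hS]; ring
  · norm_num [shallowDiagonalSum_zero, shallowDiagonalSum_one, hL, hL0, hL1]
  · norm_num [hS, shallowDiagonalSum_zero, shallowDiagonalSum_one, hL, hL0, hL1]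

/-- Lucas: L_{2n+2} = Σ_{j=0}^{⌊n/2⌋} C(n−j,j)(−1)^j 3^{n+1−2j} − 2 Σ_{j=0}^{⌊(n−1)/2⌋} C(n−j−1,j)(−1)^j 3^{n−1−2j}. -/
theorem lucas_binomial_even (L : ℕ → ℤ)
    (hL0 : L 0 = 2) (hL1 : L 1 = 1)
    (hL : ∀ n : ℕ, L (n + 2) = L (n + 1) + L n)
    (n : ℕ) (hn : 2 ≤ n) :
    L (2 * n + 2) = (∑ j ∈ Finset.range (n / 2 + 1),
        ((n - j).choose j : ℤ) * (-1 : ℤ) ^ j * 3 ^ (n + 1 - 2 * j)) -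
      2 * ∑ j ∈ Finset.range ((n - 1) / 2 + 1),
        ((n - j - 1).choose j : ℤ) * (-1 : ℤ) ^ j * 3 ^ (n - 1 - 2 * j) := by
  obtain ⟨m, rfl⟩ : ∃ m, n = m + 1 := ⟨n - 1, by omega⟩
  have first_sum : ∑ j ∈ range ((m + 1) / 2 + 1),
      ((m + 1 - j).choose j : ℤ) * (-1) ^ j * 3 ^ (m + 1 + 1 - 2 * j) =
        3 * shallowDiagonalSum 3 (-1) (m + 1) := by
    rw [shallowDiagonalSum, mul_sum]
    refine sum_congr rfl fun j hj ↦ ?_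
    rw [mem_range] at hj
    rw [shallowDiagonalTerm, show m + 1 + 1 - 2 * j = m + 1 - 2 * j + 1 by omega, pow_succ]
    ring
  have second_sum : ∑ j ∈ range ((m + 1 - 1) / 2 + 1),
      ((m + 1 - j - 1).choose j : ℤ) * (-1) ^ j * 3 ^ (m + 1 - 1 - 2 * j) =
        shallowDiagonalSum 3 (-1) m := by
    simp only [Nat.add_sub_cancel, Nat.sub_right_comm _ _ 1, shallowDiagonalSum,
      shallowDiagonalTerm]
  rw [first_sum, second_sum, show 2 * (m + 1) + 2 = 2 * m + 4 by ring]
  exact lucas_even_eq_shallowDiagonalSum hL0 hL1 hL m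
end
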